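/- Let 0<β<1, b ∈ Λ̇_β on ℝⁿ, and Q = Q(c_Q, t) a cube centered at c_Q with side length t. For k ≥ 2 let 3^kQ = Q(c_Q, 3^k t). Then for every f ∈ L¹_loc and every x_Q ∈ Q, the sum Σ_{k≥2} ∫_{3^kQ \ 3^{k-1}Q} (t^n / |x_Q - z|^{2n}) |b(z) - b_{3Q}| |f(z)| dz ≤ C ‖b‖_{Λ̇_β} t^{β} M f(x) for every x ∈ Q, where M is the Hardy–Littlewood maximal operator and C depends only on n and β. -/

import Mathlib

/-!
On the `k`-th annulus `3^{k+2}Q ∖ 3^{k+1}Q` one has `|x_Q - z| ≥ 3^k t`, the Hölder bound gives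
`|b(z) - b_{3Q}| ≤ L (9 √n 3^k t)^β`, and the annulus lies in a ball about `x` of radius
`≍ 3^k t`, on which the integral of `|f|` is controlled by `M f(x)`. The `k`-th term is therefore
`≲ L t^β 3^{k(β - n)} M f(x) ≤ L t^β (3^{β-1})^k M f(x)`, a geometric series since
`β < 1 ≤ n`.
-/

open MeasureTheory ENNReal

/-- The axis-parallel cube in `ℝⁿ` with center `c` and side length `t`. -/
def cube {n : ℕ} (c : EuclideanSpace ℝ (Fin n)) (t : ℝ) : Set (EuclideanSpace ℝ (Fin n)) :=
  {y | ∀ i, |y i - c i| ≤ t / 2}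

/-- The Hardy–Littlewood maximal function `M f(x) = sup_{r>0} r^{-n} ∫_{B(x,r)} f`. -/
noncomputable def maxFun {n : ℕ} (f : EuclideanSpace ℝ (Fin n) → ℝ≥0∞)
    (x : EuclideanSpace ℝ (Fin n)) : ℝ≥0∞ :=
  ⨆ (r : ℝ) (_ : 0 < r), (ENNReal.ofReal r ^ n)⁻¹ * ∫⁻ y in Metric.ball x r, f y

namespace EuclideanSpace

variable {n : ℕ}

lemma abs_sub_apply_le_dist (x y : EuclideanSpace ℝ (Fin n)) (i : Fin n) :
    |x i - y i| ≤ dist x y := by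
  simpa only [Real.dist_eq] using PiLp.dist_apply_le x y i

lemma dist_le_sqrt_mul_of_abs_sub_apply_le {x y : EuclideanSpace ℝ (Fin n)} {m : ℝ}
    (hm : 0 ≤ m) (h : ∀ i, |x i - y i| ≤ m) : dist x y ≤ √n * m := by
  have hsum : ∑ i, dist (x i) (y i) ^ 2 ≤ n * m ^ 2 := by
    simpa using Finset.sum_le_card_nsmul Finset.univ (fun i => dist (x i) (y i) ^ 2) (m ^ 2)
      fun i _ => pow_le_pow_left₀ dist_nonneg (by simpa only [Real.dist_eq] using h i) 2
  rw [EuclideanSpace.dist_eq, ← Real.sqrt_sq hm, ← Real.sqrt_mul n.cast_nonneg]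
  exact Real.sqrt_le_sqrt hsum

end EuclideanSpace

open EuclideanSpace

section Cube

variable {n : ℕ} {c y z : EuclideanSpace ℝ (Fin n)} {t u : ℝ}

lemma center_mem_cube (ht : 0 ≤ t) : c ∈ cube c t := fun i => by
  rw [sub_self, abs_zero]; linarith

lemma cube_mono (h : t ≤ u) : cube c t ⊆ cube c u := fun _ hy i => (hy i).trans (by linarith)

lemma dist_le_of_mem_cube (ht : 0 ≤ t) (hy : y ∈ cube c t) (hz : z ∈ cube c t) :
    dist y z ≤ √n * t :=
  dist_le_sqrt_mul_of_abs_sub_apply_le ht fun i => by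
    linarith [hy i, hz i, abs_sub_le (y i) (c i) (z i), abs_sub_comm (c i) (z i)]

lemma lt_dist_of_mem_cube_of_notMem_cube (hy : y ∈ cube c t) (hz : z ∉ cube c u) :
    (u - t) / 2 < dist y z := by
  obtain ⟨i, hi⟩ : ∃ i, u / 2 < |z i - c i| := by simpa [cube] using hz
  linarith [hy i, abs_sub_le (z i) (y i) (c i), abs_sub_comm (z i) (y i),
    abs_sub_apply_le_dist y z i]

lemma ball_subset_cube (c : EuclideanSpace ℝ (Fin n)) (t : ℝ) :
    Metric.ball c (t / 2) ⊆ cube c t :=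
  fun _ hy i => (abs_sub_apply_le_dist _ c i).trans (Metric.mem_ball.1 hy).le

lemma isClosed_cube (c : EuclideanSpace ℝ (Fin n)) (t : ℝ) : IsClosed (cube c t) := by
  simp only [cube, Set.ofPred_forall]
  exact isClosed_iInter fun i => isClosed_le (by fun_prop) continuous_const

lemma isCompact_cube (c : EuclideanSpace ℝ (Fin n)) (ht : 0 ≤ t) : IsCompact (cube c t) :=
  Metric.isCompact_of_isClosed_isBounded (isClosed_cube c t) <|
    (Metric.isBounded_closedBall (x := c) (r := √n * t)).subset fun _ hy =>
      dist_le_of_mem_cube ht hy (center_mem_cube ht)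

lemma volume_cube_pos (c : EuclideanSpace ℝ (Fin n)) (ht : 0 < t) : 0 < volume (cube c t) :=
  (Metric.measure_ball_pos volume c (half_pos ht)).trans_le
    (measure_mono (ball_subset_cube c t))

end Cube

lemma continuous_of_abs_sub_le_mul_rpow {X : Type*} [PseudoMetricSpace X] {b : X → ℝ}
    {L β : ℝ} (hβ : 0 < β) (h : ∀ x y, |b x - b y| ≤ L * dist x y ^ β) : Continuous b := by
  refine HolderWith.continuous (C := L.toNNReal) (r := β.toNNReal) (fun x y => ?_)
    (Real.toNNReal_pos.2 hβ)
  rw [edist_dist, edist_dist, Real.dist_eq, Real.coe_toNNReal _ hβ.le,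
    ENNReal.ofReal_rpow_of_nonneg dist_nonneg hβ.le]
  change _ ≤ ENNReal.ofReal L * _
  rw [← ENNReal.ofReal_mul' (by positivity)]
  exact ENNReal.ofReal_le_ofReal (h x y)

lemma abs_sub_setAverage_le {X : Type*} [MeasurableSpace X] {μ : Measure X} {S : Set X}
    (hS : MeasurableSet S) (h0 : μ S ≠ 0) (hfin : μ S ≠ ∞) {b : X → ℝ} (hb : IntegrableOn b S μ)
    {a M : ℝ} (h : ∀ w ∈ S, |a - b w| ≤ M) : |a - ⨍ w in S, b w ∂μ| ≤ M := by
  have hmem := (convex_closedBall a M).set_average_mem Metric.isClosed_closedBall h0 hfin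
    ((ae_restrict_iff' hS).2 (ae_of_all _ fun w hw => ?_)) hb
  · simpa [Real.dist_eq, abs_sub_comm] using hmem
  · simpa [Real.dist_eq, abs_sub_comm] using h w hw

lemma lintegral_ball_le_maxFun {n : ℕ} (f : EuclideanSpace ℝ (Fin n) → ℝ≥0∞)
    (x : EuclideanSpace ℝ (Fin n)) {R : ℝ} (hR : 0 < R) :
    ∫⁻ y in Metric.ball x R, f y ≤ ENNReal.ofReal R ^ n * maxFun f x :=
  (ENNReal.inv_mul_le_iff (pow_ne_zero _ (ENNReal.ofReal_pos.2 hR).ne') (by simp)).1 <|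
    le_iSup₂ (f := fun (r : ℝ) (_ : 0 < r) =>
      (ENNReal.ofReal r ^ n)⁻¹ * ∫⁻ y in Metric.ball x r, f y) R hR

lemma setLIntegral_le_ofReal_mul_maxFun {n : ℕ} {S : Set (EuclideanSpace ℝ (Fin n))}
    (hS : MeasurableSet S) {x : EuclideanSpace ℝ (Fin n)} {R : ℝ} (hR : 0 < R)
    (hSR : S ⊆ Metric.ball x R) {g f : EuclideanSpace ℝ (Fin n) → ℝ} {E : ℝ} (hE : 0 ≤ E)
    (hg : ∀ z ∈ S, g z ≤ E * |f z|) :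
    ∫⁻ z in S, ENNReal.ofReal (g z) ≤
      ENNReal.ofReal (E * R ^ n) * maxFun (fun y => ENNReal.ofReal |f y|) x :=
  calc ∫⁻ z in S, ENNReal.ofReal (g z)
      ≤ ∫⁻ z in S, ENNReal.ofReal E * ENNReal.ofReal |f z| :=
        setLIntegral_mono' hS fun z hz => by
          rw [← ENNReal.ofReal_mul hE]; exact ENNReal.ofReal_le_ofReal (hg z hz)
    _ = ENNReal.ofReal E * ∫⁻ z in S, ENNReal.ofReal |f z| :=
        lintegral_const_mul' _ _ ENNReal.ofReal_ne_top
    _ ≤ ENNReal.ofReal E * ∫⁻ z in Metric.ball x R, ENNReal.ofReal |f z| := by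
        gcongr
    _ ≤ ENNReal.ofReal E *
          (ENNReal.ofReal R ^ n * maxFun (fun y => ENNReal.ofReal |f y|) x) := by
        gcongr; exact lintegral_ball_le_maxFun _ x hR
    _ = _ := by rw [ENNReal.ofReal_mul hE, ENNReal.ofReal_pow hR.le, mul_assoc]

lemma annulus_weight_le {n : ℕ} (hn : 0 < n) {β t a a' : ℝ} (ht : 0 < t) (ha : 0 ≤ a)
    (ha' : 0 ≤ a') (k : ℕ) :
    t ^ n / (3 ^ k * t) ^ (2 * n) * (a * (3 ^ (k + 2) * t)) ^ β * (a' * (3 ^ (k + 2) * t)) ^ n ≤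
      (9 * a) ^ β * (9 * a') ^ n * t ^ β * (3 ^ (β - 1)) ^ k := by
  set ρ : ℝ := 3 ^ k with hρ
  have hρ1 : 1 ≤ ρ := one_le_pow₀ (by norm_num)
  have hρ0 : 0 < ρ := by positivity
  have hT : (3 : ℝ) ^ (k + 2) * t = 9 * ρ * t := by rw [pow_add]; ring
  have hsplit : t ^ n / (ρ * t) ^ (2 * n) * (a * (3 ^ (k + 2) * t)) ^ β *
      (a' * (3 ^ (k + 2) * t)) ^ n = (9 * a) ^ β * (9 * a') ^ n * t ^ β * (ρ ^ β / ρ ^ n) := by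
    rw [hT, ← mul_assoc, ← mul_assoc, Real.mul_rpow (by positivity) ht.le,
      Real.mul_rpow (by positivity) hρ0.le]
    field_simp
    ring
  have hratio : ρ ^ β / ρ ^ n ≤ (3 ^ (β - 1)) ^ k :=
    calc ρ ^ β / ρ ^ n ≤ ρ ^ β / ρ := by gcongr; exact le_self_pow₀ hρ1 hn.ne'
      _ = (3 ^ (β - 1)) ^ k := by
        rw [Real.rpow_sub three_pos, Real.rpow_one, div_pow, hρ,
          ← Real.rpow_pow_comm (by norm_num)]
  rw [hsplit]
  gcongr

lemma tsum_ofReal_mul_geometric {a r : ℝ} (ha : 0 ≤ a) (hr0 : 0 ≤ r) (hr1 : r < 1) :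
    ∑' k : ℕ, ENNReal.ofReal (a * r ^ k) = ENNReal.ofReal (a * (1 - r)⁻¹) := by
  rw [← ENNReal.ofReal_tsum_of_nonneg (fun k => by positivity)
    ((summable_geometric_of_lt_one hr0 hr1).mul_left a), tsum_mul_left,
    tsum_geometric_of_lt_one hr0 hr1]

lemma lintegral_annulus_le {n : ℕ} {β L t : ℝ} (hβ : 0 < β) (hL : 0 ≤ L)
    {b : EuclideanSpace ℝ (Fin n) → ℝ} (hb : ∀ x y, |b x - b y| ≤ L * dist x y ^ β)
    (f : EuclideanSpace ℝ (Fin n) → ℝ) {c xQ x : EuclideanSpace ℝ (Fin n)} (ht : 0 < t)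
    (hxQ : xQ ∈ cube c t) (hx : x ∈ cube c t) (k : ℕ) :
    ∫⁻ z in cube c (3 ^ (k + 2) * t) \ cube c (3 ^ (k + 1) * t),
        ENNReal.ofReal
          (t ^ n / dist xQ z ^ (2 * n) * |b z - ⨍ w in cube c (3 * t), b w| * |f z|) ≤
      ENNReal.ofReal (L * (t ^ n / (3 ^ k * t) ^ (2 * n) * (√n * (3 ^ (k + 2) * t)) ^ β *
        ((√n + 1) * (3 ^ (k + 2) * t)) ^ n)) * maxFun (fun y => ENNReal.ofReal |f y|) x := by
  set T : ℝ := 3 ^ (k + 2) * t with hT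
  have h3k : (1 : ℝ) ≤ 3 ^ k := one_le_pow₀ (by norm_num)
  have h3T : 3 * t ≤ T := by rw [hT, pow_add]; nlinarith
  have hosc : ∀ z ∈ cube c T, |b z - ⨍ w in cube c (3 * t), b w| ≤ L * (√n * T) ^ β :=
    fun z hz => abs_sub_setAverage_le (isClosed_cube c _).measurableSet
      (volume_cube_pos c (by positivity)).ne'
      (isCompact_cube c (by positivity)).measure_lt_top.ne
      ((continuous_of_abs_sub_le_mul_rpow hβ hb).continuousOn.integrableOn_compact
        (isCompact_cube c (by positivity)))
      fun w hw => (hb z w).trans <| by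
        gcongr; exact dist_le_of_mem_cube (by positivity) hz (cube_mono h3T hw)
  have hfar : ∀ z ∉ cube c (3 ^ (k + 1) * t), 3 ^ k * t ≤ dist xQ z := fun z hz =>
    le_of_lt <| lt_of_le_of_lt (by rw [pow_succ]; nlinarith)
      (lt_dist_of_mem_cube_of_notMem_cube hxQ hz)
  refine (setLIntegral_le_ofReal_mul_maxFun
    ((isClosed_cube c _).measurableSet.diff (isClosed_cube c _).measurableSet)
    (R := (√n + 1) * T) (by positivity) ?_
    (E := L * (t ^ n / (3 ^ k * t) ^ (2 * n) * (√n * T) ^ β)) (by positivity) ?_).trans_eq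
    (by ring_nf)
  · rintro z ⟨hz, -⟩
    rw [Metric.mem_ball]
    calc dist z x ≤ √n * T := dist_le_of_mem_cube (by positivity) hz (cube_mono (by linarith) hx)
      _ < (√n + 1) * T := by nlinarith
  · rintro z ⟨hzT, hz⟩
    calc t ^ n / dist xQ z ^ (2 * n) * |b z - ⨍ w in cube c (3 * t), b w| * |f z|
        ≤ t ^ n / (3 ^ k * t) ^ (2 * n) * (L * (√n * T) ^ β) * |f z| := by
          gcongr
          · exact hfar z hz
          · exact hosc z hzT
      _ = _ := by ring

/-- For `b ∈ Λ̇_β` (seminorm at most `L`), a cube `Q = Q(c,t)` and `x_Q, x ∈ Q`,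
`Σ_{k≥2} ∫_{3^kQ∖3^{k-1}Q} t^n/|x_Q-z|^{2n} |b(z)-b_{3Q}||f(z)| dz ≤ C L t^β M f(x)`. -/
theorem stmt3 (n : ℕ) (hn : 0 < n) (β : ℝ) (hβ : 0 < β) (hβ1 : β < 1) :
    ∃ C > 0, ∀ (b : EuclideanSpace ℝ (Fin n) → ℝ) (L : ℝ), 0 ≤ L →
      (∀ x y, |b x - b y| ≤ L * dist x y ^ β) →
      ∀ f : EuclideanSpace ℝ (Fin n) → ℝ, LocallyIntegrable f volume →
      ∀ (c : EuclideanSpace ℝ (Fin n)) (t : ℝ), 0 < t →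
      ∀ xQ ∈ cube c t, ∀ x ∈ cube c t,
        (∑' k : ℕ, ∫⁻ z in cube c (3 ^ (k + 2) * t) \ cube c (3 ^ (k + 1) * t),
            ENNReal.ofReal
              (t ^ n / dist xQ z ^ (2 * n) * |b z - ⨍ w in cube c (3 * t), b w| * |f z|)) ≤
          ENNReal.ofReal (C * L * t ^ β) * maxFun (fun y => ENNReal.ofReal |f y|) x := by
  set r : ℝ := 3 ^ (β - 1)
  have hr0 : 0 < r := by positivity
  have hr1 : r < 1 := Real.rpow_lt_one_of_one_lt_of_neg (by norm_num) (by linarith)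
  have hsqrt : 0 < √(n : ℝ) := Real.sqrt_pos.2 (by exact_mod_cast hn)
  set C₁ : ℝ := (9 * √n) ^ β * (9 * (√n + 1)) ^ n
  have hC₁ : 0 < C₁ := by positivity
  refine ⟨C₁ * (1 - r)⁻¹, mul_pos hC₁ (inv_pos.2 (sub_pos.2 hr1)), ?_⟩
  intro b L hL hb f _ c t ht xQ hxQ x hx
  calc _ ≤ ∑' k : ℕ, ENNReal.ofReal (L * (C₁ * t ^ β) * r ^ k) *
          maxFun (fun y => ENNReal.ofReal |f y|) x :=
        ENNReal.tsum_le_tsum fun k => (lintegral_annulus_le hβ hL hb f ht hxQ hx k).trans <| by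
          gcongr ?_ * _
          rw [mul_assoc L]
          exact ENNReal.ofReal_le_ofReal <| mul_le_mul_of_nonneg_left
            (annulus_weight_le hn ht hsqrt.le (by positivity) k) hL
    _ = ENNReal.ofReal (L * (C₁ * t ^ β) * (1 - r)⁻¹) *
          maxFun (fun y => ENNReal.ofReal |f y|) x := by
        rw [ENNReal.tsum_mul_right, tsum_ofReal_mul_geometric (by positivity) hr0.le hr1]
    _ = _ := by ring_nf
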